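/- arXiv:2310.17753 — 2 statements merged into one kernel-verified Lean document; each statement's English description precedes it below -/
import Mathlib

section
/- The alternating grid orientation on ℤ × ℤ is strongly connected: for every pair of vertices u and v in ℤ × ℤ, there exists a directed path from u to v, i.e., v is reachable from u under the reflexive–transitive closure of the step relation R. -/
/-- The alternating grid orientation on `ℤ × ℤ`: a horizontal move is rightward
on even rows and leftward on odd rows (`x' = x + (-1)^y`), and a vertical move
is upward on even columns and downward on odd columns (`y' = y + (-1)^x`).
Here `(-1)^n` for `n : ℤ` is computed in the unit group `ℤˣ`. -/
def altGridStep (u v : ℤ × ℤ) : Prop :=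
  (v.2 = u.2 ∧ v.1 = u.1 + (((-1 : ℤˣ) ^ u.2 : ℤˣ) : ℤ)) ∨
  (v.1 = u.1 ∧ v.2 = u.2 + (((-1 : ℤˣ) ^ u.1 : ℤˣ) : ℤ))

/-!
Every edge of the orientation lies on a directed unit square: the unit squares whose lower-left
corner `(x, y)` has `x + y` odd are directed 4-cycles. So the reverse of each edge is a path of
three edges, reachability is symmetric, and strong connectivity reduces to connectivity of the
undirected grid.
-/

open Relation

theorem Relation.ReflTransGen.symm_of_reverse {α : Type*} {r : α → α → Prop}
    (h : ∀ a b, r a b → ReflTransGen r b a) {a b : α} (hab : ReflTransGen r a b) :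
    ReflTransGen r b a := by
  induction hab with
  | refl => exact .refl
  | tail _ hbc ih => exact (h _ _ hbc).trans ih

namespace AltGrid

def sign (n : ℤ) : ℤ := ((-1 : ℤˣ) ^ n : ℤˣ)

theorem sign_eq_one_or (n : ℤ) : sign n = 1 ∨ sign n = -1 := by
  rcases Int.units_eq_one_or ((-1 : ℤˣ) ^ n) with h | h <;> simp [sign, h]

theorem odd_sign (n : ℤ) : Odd (sign n) := by
  rcases sign_eq_one_or n with h | h <;> rw [h] <;> decide

theorem sign_add_odd {k : ℤ} (hk : Odd k) (n : ℤ) : sign (n + k) = -sign n := by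
  rw [sign, zpow_add, hk.neg_one_zpow, mul_neg_one, Units.val_neg, sign]

theorem step_horizontal {x x' y : ℤ} (h : x' = x + sign y) : altGridStep (x, y) (x', y) :=
  Or.inl ⟨rfl, h⟩

theorem step_vertical {x y y' : ℤ} (h : y' = y + sign x) : altGridStep (x, y) (x, y') :=
  Or.inr ⟨rfl, h⟩

theorem step_swap_iff {u v : ℤ × ℤ} : altGridStep u.swap v.swap ↔ altGridStep u v :=
  or_comm

theorem reflTransGen_swap {u v : ℤ × ℤ} (h : ReflTransGen altGridStep u v) :
    ReflTransGen altGridStep u.swap v.swap :=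
  h.lift Prod.swap fun _ _ => step_swap_iff.mpr

theorem reflTransGen_horizontal_reverse (x y : ℤ) :
    ReflTransGen altGridStep (x + sign y, y) (x, y) := by
  have hcol : sign (x + sign y) = -sign x := sign_add_odd (odd_sign y) x
  have hrow : sign (y - sign x) = -sign y := by
    rw [sub_eq_add_neg, sign_add_odd (odd_sign x).neg]
  have up : altGridStep (x + sign y, y) (x + sign y, y - sign x) :=
    step_vertical (by rw [hcol]; ring)
  have back : altGridStep (x + sign y, y - sign x) (x, y - sign x) :=
    step_horizontal (by rw [hrow]; ring)
  have down : altGridStep (x, y - sign x) (x, y) :=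
    step_vertical (by ring)
  exact ((ReflTransGen.single up).tail back).tail down

theorem reflTransGen_of_step_reverse {u v : ℤ × ℤ} (h : altGridStep u v) :
    ReflTransGen altGridStep v u := by
  obtain ⟨x, y⟩ := u
  obtain ⟨x', y'⟩ := v
  rcases h with ⟨hy : y' = y, hx : x' = x + sign y⟩ | ⟨hx : x' = x, hy : y' = y + sign x⟩
  · subst x' y'
    exact reflTransGen_horizontal_reverse x y
  · subst x' y'
    exact reflTransGen_swap (reflTransGen_horizontal_reverse y x)

theorem reflTransGen_symm {u v : ℤ × ℤ} (h : ReflTransGen altGridStep u v) :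
    ReflTransGen altGridStep v u :=
  h.symm_of_reverse fun _ _ => reflTransGen_of_step_reverse

theorem reflTransGen_right (x y : ℤ) : ReflTransGen altGridStep (x, y) (x + 1, y) := by
  rcases sign_eq_one_or y with h | h
  · exact .single (step_horizontal (by rw [h]))
  · exact reflTransGen_symm (.single (step_horizontal (by rw [h]; ring)))

theorem reflTransGen_row (x x' y : ℤ) : ReflTransGen altGridStep (x, y) (x', y) := by
  have hline : ReflTransGen (fun i j : ℤ => ReflTransGen altGridStep (i, y) (j, y)) x x' :=
    reflTransGen_of_succ _ (fun i _ => reflTransGen_right i y)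
      (fun i _ => reflTransGen_symm (reflTransGen_right i y))
  exact hline.lift' (·, y) fun _ _ => id

end AltGrid

/-- The alternating grid orientation is strongly connected: every vertex is
reachable from every vertex via directed edges. -/
theorem altGrid_strongly_connected (u v : ℤ × ℤ) :
    Relation.ReflTransGen altGridStep u v := by
  obtain ⟨a, b⟩ := u
  obtain ⟨c, d⟩ := v
  have hrow : ReflTransGen altGridStep (a, b) (c, b) := AltGrid.reflTransGen_row a c b
  have hcol : ReflTransGen altGridStep (c, b) (c, d) :=
    AltGrid.reflTransGen_swap (AltGrid.reflTransGen_row b d c)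
  exact hrow.trans hcol
end

section
/- For any two vertices u = (x₁,y₁) and v = (x₂,y₂) of ℤ × ℤ, there exists a directed path from u to v under the alternating grid orientation whose length is at most |x₂ - x₁| + |y₂ - y₁| + 5. In other words, the shortest directed distance exceeds the undirected (Manhattan) shortest distance by at most 5. -/
inductive ReachWithin {α : Type*} (R : α → α → Prop) : ℕ → α → α → Prop
  | refl (n : ℕ) (a : α) : ReachWithin R n a a
  | cons {n : ℕ} {a b c : α} : R a b → ReachWithin R n b c → ReachWithin R (n + 1) a c

namespace ReachWithin

variable {α β : Type*} {R : α → α → Prop}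

theorem mono {m n : ℕ} {a b : α} (h : ReachWithin R m a b) (hmn : m ≤ n) :
    ReachWithin R n a b := by
  induction h generalizing n with
  | refl => exact .refl n _
  | cons hab _ ih =>
    obtain ⟨n, rfl⟩ := Nat.exists_eq_add_of_lt hmn
    exact .cons hab (ih (by omega))

theorem exists_path {n : ℕ} {a b : α} (h : ReachWithin R n a b) :
    ∃ (L : ℕ) (w : ℕ → α), w 0 = a ∧ w L = b ∧ (∀ i < L, R (w i) (w (i + 1))) ∧ L ≤ n := by
  induction h with
  | refl n a => exact ⟨0, fun _ => a, rfl, rfl, by simp, n.zero_le⟩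
  | @cons n a b c hab _ ih =>
    obtain ⟨L, w, rfl, hwL, hw, hL⟩ := ih
    refine ⟨L + 1, fun | 0 => a | i + 1 => w i, rfl, hwL, ?_, by omega⟩
    rintro (_ | i) hi
    · exact hab
    · exact hw i (by omega)

theorem of_lift {S : β → β → Prop} (φ : α → β) {t : β} {v : α}
    (hlift : ∀ a b, S (φ a) b → ∃ a', R a a' ∧ φ a' = b) (hfiber : ∀ a, φ a = t → a = v)
    {n : ℕ} {a : α} (h : ReachWithin S n (φ a) t) : ReachWithin R n a v := by
  generalize hx : φ a = x at h
  induction h generalizing a with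
  | refl => exact hfiber a hx ▸ .refl _ _
  | cons hxy _ ih =>
    subst hx
    obtain ⟨a', ha', rfl⟩ := hlift a _ hxy
    exact .cons ha' (ih hfiber rfl)

end ReachWithin

def FrameMove (s t : ℤ × ℤ) : Prop := t = (s.1 - 1, -s.2) ∨ t = (-s.1, s.2 - 1)

theorem reachWithin_frameMove_add_two_left {n : ℕ} {A B : ℤ}
    (h : ReachWithin FrameMove n (A, B) 0) : ReachWithin FrameMove (n + 2) (A + 2, B) 0 :=
  .cons (Or.inl rfl) (.cons (by left; ext <;> simp; ring) h)

theorem reachWithin_frameMove_add_two_right {n : ℕ} {A B : ℤ}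
    (h : ReachWithin FrameMove n (A, B) 0) : ReachWithin FrameMove (n + 2) (A, B + 2) 0 :=
  .cons (Or.inr rfl) (.cons (by right; ext <;> simp; ring) h)

theorem reachWithin_frameMove_natCast (a b : ℕ) :
    ReachWithin FrameMove (a + b + 2) ((a : ℤ), (b : ℤ)) 0 := by
  induction a using Nat.twoStepInduction with
  | zero =>
    induction b using Nat.twoStepInduction with
    | zero => exact .refl _ _
    | one => exact .cons (Or.inr rfl) (.refl _ _)
    | more b ih _ =>
      simpa [add_assoc] using reachWithin_frameMove_add_two_right ih
  | one =>
    induction b using Nat.twoStepInduction with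
    | zero => exact .cons (Or.inl rfl) (.refl _ _)
    | one =>
      -- `(1, 1) → (0, -1) → (-1, 1) → (1, 0) → (0, 0)`
      exact .cons (Or.inl rfl) (.cons (Or.inl rfl)
        (.cons (Or.inr rfl) (.cons (Or.inl rfl) (.refl _ _))))
    | more b ih _ =>
      simpa [add_assoc] using reachWithin_frameMove_add_two_right ih
  | more a ih _ =>
    simpa [add_assoc, add_right_comm _ 2] using reachWithin_frameMove_add_two_left ih

theorem reachWithin_frameMove_of_nonneg {A B : ℤ} (hA : 0 ≤ A) (hB : 0 ≤ B) :
    ReachWithin FrameMove (A.natAbs + B.natAbs + 2) (A, B) 0 := by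
  lift A to ℕ using hA
  lift B to ℕ using hB
  exact reachWithin_frameMove_natCast A B

theorem reachWithin_frameMove (A B : ℤ) :
    ReachWithin FrameMove (A.natAbs + B.natAbs + 4) (A, B) 0 := by
  obtain ⟨hA, hB⟩ | ⟨hA, hB⟩ | ⟨hA, hB⟩ | ⟨hA, hB⟩ | ⟨hA, hB⟩ :
      (0 ≤ A ∧ 0 ≤ B) ∨ (0 < A ∧ B < 0) ∨ (A < 0 ∧ 0 < B) ∨ (A ≤ 0 ∧ B < 0) ∨ (A < 0 ∧ B ≤ 0) := by
    omega
  · exact (reachWithin_frameMove_of_nonneg hA hB).mono (by omega)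
  · exact .cons (Or.inl rfl)
      ((reachWithin_frameMove_of_nonneg (by omega : 0 ≤ A - 1) (by omega : 0 ≤ -B)).mono (by omega))
  · exact .cons (Or.inr rfl)
      ((reachWithin_frameMove_of_nonneg (by omega : 0 ≤ -A) (by omega : 0 ≤ B - 1)).mono (by omega))
  · exact .cons (Or.inl rfl) (.cons (Or.inr rfl)
      ((reachWithin_frameMove_of_nonneg (by omega : 0 ≤ -(A - 1)) (by omega : 0 ≤ -B - 1)).mono
        (by omega)))
  · exact .cons (Or.inr rfl) (.cons (Or.inl rfl)
      ((reachWithin_frameMove_of_nonneg (by omega : 0 ≤ -A - 1) (by omega : 0 ≤ -(B - 1))).mono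
        (by omega)))

def altGridFrame (v u : ℤ × ℤ) : ℤ × ℤ :=
  ((((-1 : ℤˣ) ^ u.2 : ℤˣ) : ℤ) * (v.1 - u.1), (((-1 : ℤˣ) ^ u.1 : ℤˣ) : ℤ) * (v.2 - u.2))

theorem neg_one_zpow_add_unit (k : ℤ) (ε : ℤˣ) : (-1 : ℤˣ) ^ (k + (ε : ℤ)) = -(-1) ^ k := by
  obtain rfl | rfl := Int.units_eq_one_or ε <;> simp [zpow_add]

theorem eq_of_altGridFrame_eq_zero {u v : ℤ × ℤ} (h : altGridFrame v u = 0) : u = v := by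
  simp only [altGridFrame, Prod.mk_eq_zero, mul_eq_zero, Units.ne_zero, false_or, sub_eq_zero] at h
  exact Prod.ext h.1.symm h.2.symm

theorem exists_altGridStep_of_frameMove {u v s : ℤ × ℤ} (h : FrameMove (altGridFrame v u) s) :
    ∃ u', altGridStep u u' ∧ altGridFrame v u' = s := by
  rcases h with rfl | rfl
  · refine ⟨(u.1 + ((-1 : ℤˣ) ^ u.2 : ℤˣ), u.2), .inl ⟨rfl, rfl⟩, ?_⟩
    simp only [altGridFrame, neg_one_zpow_add_unit, Units.val_neg, neg_mul, Prod.mk.injEq,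
      and_true]
    linear_combination -Int.units_coe_mul_self ((-1 : ℤˣ) ^ u.2)
  · refine ⟨(u.1, u.2 + ((-1 : ℤˣ) ^ u.1 : ℤˣ)), .inr ⟨rfl, rfl⟩, ?_⟩
    simp only [altGridFrame, neg_one_zpow_add_unit, Units.val_neg, neg_mul, Prod.mk.injEq,
      true_and]
    linear_combination -Int.units_coe_mul_self ((-1 : ℤˣ) ^ u.1)

/-- For any two vertices `u v : ℤ × ℤ` there is a directed path from `u` to `v`
under the alternating grid orientation of length at most the Manhattan distance
plus `5`. -/
theorem altGrid_directed_dist_le_manhattan_add_five (u v : ℤ × ℤ) :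
    ∃ (L : ℕ) (w : ℕ → ℤ × ℤ),
      w 0 = u ∧ w L = v ∧ (∀ i < L, altGridStep (w i) (w (i + 1))) ∧
      (L : ℤ) ≤ |v.1 - u.1| + |v.2 - u.2| + 5 := by
  obtain ⟨L, w, hw0, hwL, hw, hL⟩ :=
    (reachWithin_frameMove (altGridFrame v u).1 (altGridFrame v u).2).of_lift (altGridFrame v)
      (fun _ _ => exists_altGridStep_of_frameMove) (fun _ => eq_of_altGridFrame_eq_zero)
      |>.exists_path
  refine ⟨L, w, hw0, hwL, hw, ?_⟩
  simp only [altGridFrame, Int.natAbs_mul, Int.units_natAbs, one_mul] at hL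
  zify at hL
  omega
end
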